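/- (Theorem 4) Let R₁,…,Rₘ : ℝ^d → ℝ^d (m ≥ 1) be surjective isometries fixing the origin and let f₁,…,fₙ : ℝ^d → ℝ^d (n ≥ 1) be Banach contractions. Let G be the group generated by R₁,…,Rₘ inside the group of bijections of ℝ^d under composition, and assume G is finite. Then the minimal invariant set X₀ of the R-IFS {R₁,…,Rₘ, f₁,…,fₙ} satisfies X₀ = ⋃_{g ∈ G} ⋃_{j=1}^{n} g(fⱼ(X₀)); moreover, X₀ is the unique nonempty compact set A ⊆ ℝ^d with A = ⋃_{g ∈ G} ⋃_{j=1}^{n} g(fⱼ(A)). -/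

import Mathlib

open Set Metric Equiv
open scoped NNReal ENNReal

/-!
Each `Rᵢ` maps `X₀` into itself, and since every element of the finite group `G` has finite
order, `G` is the monoid generated by the `Rᵢ`; hence `g '' X₀ = X₀` for all `g ∈ G`, and the
Hutchinson operator `T K = ⋃_{g ∈ G} ⋃ⱼ g (fⱼ K)` satisfies `T X₀ ⊆ X₀`. As `g (T K) = T K`
for `g ∈ G`, the compact set `T X₀` is itself invariant for the R-IFS, so minimality gives
`X₀ ⊆ T X₀`. Uniqueness holds because `T` contracts the Hausdorff distance by the largest
contraction ratio of the `fⱼ`.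
-/

theorem LipschitzWith.infEDist_image_le {α β : Type*} [PseudoEMetricSpace α]
    [PseudoEMetricSpace β] {K : ℝ≥0} {f : α → β} (hf : LipschitzWith K f) (x : α) {t : Set α}
    (ht : t.Nonempty) : infEDist (f x) (f '' t) ≤ K * infEDist x t := by
  have := ht.to_subtype
  calc infEDist (f x) (f '' t) ≤ ⨅ y : t, K * edist x y :=
        le_iInf fun y => (infEDist_le_edist_of_mem (mem_image_of_mem f y.2)).trans (hf x y)
    _ = K * infEDist x t := by rw [infEDist, iInf_subtype', ENNReal.mul_iInf (by simp)]

theorem LipschitzWith.hausdorffEDist_image_le {α β : Type*} [PseudoEMetricSpace α]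
    [PseudoEMetricSpace β] {K : ℝ≥0} {f : α → β} (hf : LipschitzWith K f) {s t : Set α}
    (hs : s.Nonempty) (ht : t.Nonempty) :
    hausdorffEDist (f '' s) (f '' t) ≤ K * hausdorffEDist s t := by
  have key : ∀ s t : Set α, t.Nonempty →
      ∀ y ∈ f '' s, infEDist y (f '' t) ≤ K * hausdorffEDist s t := by
    rintro s t ht _ ⟨x, hx, rfl⟩
    exact (hf.infEDist_image_le x ht).trans (by gcongr; exact infEDist_le_hausdorffEDist_of_mem hx)
  refine hausdorffEDist_le_of_infEDist (key s t ht) fun y hy => ?_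
  rw [hausdorffEDist_comm]
  exact key t s hs y hy

theorem Metric.eq_of_hausdorffEDist_le_mul {α : Type*} [MetricSpace α] {s t : Set α}
    {c : ℝ≥0} (hc : c < 1) (hs : IsCompact s) (hs' : s.Nonempty) (ht : IsCompact t)
    (ht' : t.Nonempty) (h : hausdorffEDist s t ≤ c * hausdorffEDist s t) : s = t := by
  have hfin := hausdorffEDist_ne_top_of_nonempty_of_bounded hs' ht' hs.isBounded ht.isBounded
  refine (hs.isClosed.hausdorffEDist_zero_iff ht.isClosed).mp (by_contra fun h0 => ?_)
  have : (c : ℝ≥0∞) * hausdorffEDist s t < 1 * hausdorffEDist s t :=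
    (ENNReal.mul_lt_mul_iff_left h0 hfin).mpr (by exact_mod_cast hc)
  rw [one_mul] at this
  exact (h.trans_lt this).false

theorem exists_lipschitzWith_lt_one {ι α β : Type*} [Fintype ι] [PseudoMetricSpace α]
    [PseudoMetricSpace β] {f : ι → α → β} {r : ι → ℝ} (hr : ∀ j, r j < 1)
    (hf : ∀ j x y, dist (f j x) (f j y) ≤ r j * dist x y) :
    ∃ c : ℝ≥0, c < 1 ∧ ∀ j, LipschitzWith c (f j) :=
  ⟨Finset.univ.sup fun j => (r j).toNNReal,
    (Finset.sup_lt_iff zero_lt_one).mpr fun j _ => Real.toNNReal_lt_one.mpr (hr j),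
    fun j => (LipschitzWith.of_dist_le' (hf j)).weaken
      (Finset.le_sup (f := fun j => (r j).toNNReal) (Finset.mem_univ j))⟩

theorem Subgroup.closure_toSubmonoid_of_finite_closure {Γ : Type*} [Group Γ] {S : Set Γ}
    (hfin : (closure S : Set Γ).Finite) : (closure S).toSubmonoid = Submonoid.closure S := by
  have := hfin.to_subtype
  exact closure_toSubmonoid_of_isOfFinOrder fun s hs =>
    Submonoid.isOfFinOrder_coe.mpr (isOfFinOrder_of_finite (⟨s, subset_closure hs⟩ : closure S))

namespace Equiv.Perm

variable {α : Type*}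

theorem image_eq_of_mem_closure {S : Set (Perm α)}
    (hfin : (Subgroup.closure S : Set (Perm α)).Finite) {X : Set α} (hS : ∀ s ∈ S, s '' X ⊆ X)
    {g : Perm α} (hg : g ∈ Subgroup.closure S) : g '' X = X := by
  have hsub : ∀ g ∈ Subgroup.closure S, g '' X ⊆ X := by
    intro g hg
    rw [← Subgroup.mem_toSubmonoid, Subgroup.closure_toSubmonoid_of_finite_closure hfin] at hg
    induction hg using Submonoid.closure_induction with
    | mem s hs => exact hS s hs
    | one => simp
    | mul x y _ _ hx hy => rw [coe_mul, image_comp]; exact (image_mono hy).trans hx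
  exact (hsub g hg).antisymm fun x hx => ⟨g⁻¹ x, hsub g⁻¹ (inv_mem hg) ⟨x, hx, rfl⟩, by simp⟩

theorem isometry_of_mem_closure [PseudoEMetricSpace α] {S : Set (Perm α)}
    (hS : ∀ s ∈ S, Isometry s) {g : Perm α} (hg : g ∈ Subgroup.closure S) : Isometry g := by
  induction hg using Subgroup.closure_induction with
  | mem s hs => exact hS s hs
  | one => exact isometry_id
  | mul x y _ _ hx hy => exact hx.comp hy
  | inv x _ hx => exact hx.right_inv x.apply_symm_apply

end Equiv.Perm

section Hutchinson

variable {α ι : Type*} (G : Subgroup (Perm α)) (f : ι → α → α)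

def hutchinson (K : Set α) : Set α :=
  ⋃ g ∈ (G : Set (Perm α)), ⋃ j, g '' (f j '' K)

variable {G f}

theorem image_hutchinson {g : Perm α} (hg : g ∈ G) (K : Set α) :
    g '' hutchinson G f K = hutchinson G f K := by
  ext x
  simp only [hutchinson, image_iUnion, image_image, mem_iUnion, mem_image,
    SetLike.mem_coe, exists_prop]
  constructor
  · rintro ⟨h, hh, j, y, hy, rfl⟩
    exact ⟨g * h, mul_mem hg hh, j, y, hy, rfl⟩
  · rintro ⟨h, hh, j, y, hy, rfl⟩
    exact ⟨g⁻¹ * h, mul_mem (inv_mem hg) hh, j, y, hy, by simp⟩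

theorem image_subset_hutchinson (j : ι) (K : Set α) : f j '' K ⊆ hutchinson G f K :=
  fun x hx => mem_iUnion₂.mpr ⟨1, one_mem G, mem_iUnion.mpr ⟨j, by simpa using hx⟩⟩

theorem hutchinson_subset {X : Set α} (hG : ∀ g ∈ G, g '' X ⊆ X) (hf : ∀ j, f j '' X ⊆ X) :
    hutchinson G f X ⊆ X :=
  iUnion₂_subset fun g hg => iUnion_subset fun j => (image_mono (hf j)).trans (hG g hg)

theorem Set.Nonempty.hutchinson [Nonempty ι] {K : Set α} (hK : K.Nonempty) :
    (hutchinson G f K).Nonempty :=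
  (hK.image _).mono (image_subset_hutchinson (Classical.arbitrary ι) K)

theorem IsCompact.hutchinson [TopologicalSpace α] [Finite ι] (hG : (G : Set (Perm α)).Finite)
    (hGc : ∀ g ∈ G, Continuous g) (hfc : ∀ j, Continuous (f j)) {K : Set α} (hK : IsCompact K) :
    IsCompact (hutchinson G f K) :=
  hG.isCompact_biUnion fun g hg => isCompact_iUnion fun j => (hK.image (hfc j)).image (hGc g hg)

theorem hausdorffEDist_hutchinson_le [PseudoEMetricSpace α] {c : ℝ≥0}
    (hG : ∀ g ∈ G, Isometry g) (hf : ∀ j, LipschitzWith c (f j)) {P Q : Set α}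
    (hP : P.Nonempty) (hQ : Q.Nonempty) :
    hausdorffEDist (hutchinson G f P) (hutchinson G f Q) ≤ c * hausdorffEDist P Q := by
  refine hausdorffEDist_iUnion_le.trans <| iSup_le fun g => hausdorffEDist_iUnion_le.trans <|
    iSup_le fun hg => hausdorffEDist_iUnion_le.trans <| iSup_le fun j => ?_
  rw [hausdorffEDist_image (hG g hg)]
  exact (hf j).hausdorffEDist_image_le hP hQ

theorem hutchinson_eq_union_of_subset {κ : Type*} [Nonempty κ] {e : κ → Perm α}
    (he : ∀ i, e i ∈ G) {K : Set α} (hK : hutchinson G f K ⊆ K) :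
    hutchinson G f K = (⋃ i, e i '' hutchinson G f K) ∪ ⋃ j, f j '' hutchinson G f K := by
  simp only [image_hutchinson (he _), iUnion_const]
  exact (union_eq_left.mpr (iUnion_subset fun j =>
    (image_mono hK).trans (image_subset_hutchinson j K))).symm

end Hutchinson

theorem minimal_invariant_set_is_attractor_of_finite_group_general {d m n : ℕ} (hm : 0 < m) (hn : 0 < n)
    (R : Fin m → EuclideanSpace ℝ (Fin d) → EuclideanSpace ℝ (Fin d))
    (hRiso : ∀ i, Isometry (R i))
    (f : Fin n → EuclideanSpace ℝ (Fin d) → EuclideanSpace ℝ (Fin d))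
    (r : Fin n → ℝ) (hr1 : ∀ j, r j < 1)
    (hf : ∀ j x y, ‖f j x - f j y‖ ≤ r j * ‖x - y‖)
    -- the isometries as bijections of ℝ^d
    (e : Fin m → Equiv.Perm (EuclideanSpace ℝ (Fin d)))
    (he : ∀ i, ⇑(e i) = R i)
    -- the generated group G is finite
    (G : Subgroup (Equiv.Perm (EuclideanSpace ℝ (Fin d))))
    (hG : G = Subgroup.closure (Set.range e))
    (hGfin : (G : Set (Equiv.Perm (EuclideanSpace ℝ (Fin d)))).Finite)
    -- X₀ is the minimal invariant set of the R-IFS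
    (X₀ : Set (EuclideanSpace ℝ (Fin d)))
    (h0ne : X₀.Nonempty) (h0c : IsCompact X₀)
    (h0inv : X₀ = (⋃ i, R i '' X₀) ∪ (⋃ j, f j '' X₀))
    (h0min : ∀ X : Set (EuclideanSpace ℝ (Fin d)), X.Nonempty → IsClosed X →
      Bornology.IsBounded X → X = (⋃ i, R i '' X) ∪ (⋃ j, f j '' X) → X₀ ⊆ X) :
    X₀ = (⋃ g ∈ (G : Set (Equiv.Perm (EuclideanSpace ℝ (Fin d)))), ⋃ j, g '' (f j '' X₀)) ∧
    ∀ A : Set (EuclideanSpace ℝ (Fin d)), A.Nonempty → IsCompact A →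
      A = (⋃ g ∈ (G : Set (Equiv.Perm (EuclideanSpace ℝ (Fin d)))), ⋃ j, g '' (f j '' A)) →
      A = X₀ := by
  simp only [← he] at hRiso h0inv h0min
  have : Nonempty (Fin m) := ⟨⟨0, hm⟩⟩
  have : Nonempty (Fin n) := ⟨⟨0, hn⟩⟩
  obtain ⟨c, hc, hfc⟩ := exists_lipschitzWith_lt_one (f := f) hr1 fun j x y => by
    simpa only [dist_eq_norm] using hf j x y
  obtain ⟨hRX₀, hfX₀⟩ := union_subset_iff.mp h0inv.ge
  have heG : ∀ i, e i ∈ G := fun i => hG ▸ Subgroup.subset_closure (mem_range_self i)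
  have hGiso : ∀ g ∈ G, Isometry g := fun g hg =>
    Perm.isometry_of_mem_closure (forall_mem_range.mpr hRiso) (hG ▸ hg)
  have hGX₀ : ∀ g ∈ G, g '' X₀ = X₀ := fun g hg =>
    Perm.image_eq_of_mem_closure (hG ▸ hGfin) (forall_mem_range.mpr (iUnion_subset_iff.mp hRX₀))
      (hG ▸ hg)
  have hTX₀ : hutchinson G f X₀ ⊆ X₀ :=
    hutchinson_subset (fun g hg => (hGX₀ g hg).subset) (iUnion_subset_iff.mp hfX₀)
  have hTc : ∀ {K}, IsCompact K → IsCompact (hutchinson G f K) :=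
    IsCompact.hutchinson hGfin (fun g hg => (hGiso g hg).continuous) fun j => (hfc j).continuous
  have hfix : X₀ = hutchinson G f X₀ :=
    (h0min _ h0ne.hutchinson (hTc h0c).isClosed (hTc h0c).isBounded
      (hutchinson_eq_union_of_subset heG hTX₀)).antisymm hTX₀
  refine ⟨hfix, fun A hA hAc (hAfix : A = hutchinson G f A) => ?_⟩
  refine eq_of_hausdorffEDist_le_mul hc hAc hA h0c h0ne ?_
  have := hausdorffEDist_hutchinson_le hGiso hfc hA h0ne
  rwa [← hAfix, ← hfix] at this

/-- Theorem 4: if the group `G` generated by the isometries `R₁,…,Rₘ` (inside the group of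
bijections of `ℝ^d`) is finite, then the minimal invariant set `X₀` of the R-IFS
`{R₁,…,Rₘ, f₁,…,fₙ}` satisfies `X₀ = ⋃_{g ∈ G} ⋃_j g (fⱼ (X₀))` and is the unique nonempty
compact set with this property, i.e. it is the attractor of the IFS `{g ∘ fⱼ}`. -/
theorem minimal_invariant_set_is_attractor_of_finite_group {d m n : ℕ} (hm : 0 < m) (hn : 0 < n)
    (R : Fin m → EuclideanSpace ℝ (Fin d) → EuclideanSpace ℝ (Fin d))
    (hRiso : ∀ i, Isometry (R i))
    (hRsurj : ∀ i, Function.Surjective (R i))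
    (hR0 : ∀ i, R i 0 = 0)
    (f : Fin n → EuclideanSpace ℝ (Fin d) → EuclideanSpace ℝ (Fin d))
    (r : Fin n → ℝ) (hr0 : ∀ j, 0 ≤ r j) (hr1 : ∀ j, r j < 1)
    (hf : ∀ j x y, ‖f j x - f j y‖ ≤ r j * ‖x - y‖)
    -- the isometries as bijections of ℝ^d
    (e : Fin m → Equiv.Perm (EuclideanSpace ℝ (Fin d)))
    (he : ∀ i, ⇑(e i) = R i)
    -- the generated group G is finite
    (G : Subgroup (Equiv.Perm (EuclideanSpace ℝ (Fin d))))
    (hG : G = Subgroup.closure (Set.range e))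
    (hGfin : (G : Set (Equiv.Perm (EuclideanSpace ℝ (Fin d)))).Finite)
    -- X₀ is the minimal invariant set of the R-IFS
    (X₀ : Set (EuclideanSpace ℝ (Fin d)))
    (h0ne : X₀.Nonempty) (h0c : IsCompact X₀)
    (h0inv : X₀ = (⋃ i, R i '' X₀) ∪ (⋃ j, f j '' X₀))
    (h0min : ∀ X : Set (EuclideanSpace ℝ (Fin d)), X.Nonempty → IsClosed X →
      Bornology.IsBounded X → X = (⋃ i, R i '' X) ∪ (⋃ j, f j '' X) → X₀ ⊆ X) :
    X₀ = (⋃ g ∈ (G : Set (Equiv.Perm (EuclideanSpace ℝ (Fin d)))), ⋃ j, g '' (f j '' X₀)) ∧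
    ∀ A : Set (EuclideanSpace ℝ (Fin d)), A.Nonempty → IsCompact A →
      A = (⋃ g ∈ (G : Set (Equiv.Perm (EuclideanSpace ℝ (Fin d)))), ⋃ j, g '' (f j '' A)) →
      A = X₀ :=
  minimal_invariant_set_is_attractor_of_finite_group_general hm hn R hRiso f r hr1 hf e he G hG
    hGfin X₀ h0ne h0c h0inv h0min
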